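/- Let k = (k₁,k₂,k₃) ∈ ℝ³ be a unit vector (k₁²+k₂²+k₃² = 1). Then the Hermitian matrix k₁J_x + k₂J_y + k₃J_z ∈ M_d(ℂ) has eigenvalues (counted with multiplicity) exactly { j, j−1, …, −j }, i.e. the same spectrum as J_z. -/

import Mathlib

open Matrix Complex

noncomputable section

/-- Spin-z matrix for spin j = n/2 in dimension d = n+1: diagonal with entries j - k. -/
def Jz (n : ℕ) : Matrix (Fin (n+1)) (Fin (n+1)) ℂ :=
  Matrix.diagonal fun k => (n : ℂ) / 2 - (k : ℕ)

/-- Raising operator `J₊`, with entries `(J₊)_{k,k+1} = √((k+1)(n-k))`. -/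
def Jp (n : ℕ) : Matrix (Fin (n+1)) (Fin (n+1)) ℂ :=
  Matrix.of fun a b =>
    if (a : ℕ) + 1 = (b : ℕ) then ((Real.sqrt (((a : ℕ) + 1) * (n - (a : ℕ))) : ℝ) : ℂ) else 0

/-- Lowering operator `J₋ = (J₊)†`. -/
def Jm (n : ℕ) : Matrix (Fin (n+1)) (Fin (n+1)) ℂ := (Jp n)ᴴ

/-- `J_x = (J₊ + J₋)/2`. -/
def Jx (n : ℕ) : Matrix (Fin (n+1)) (Fin (n+1)) ℂ := (1/2 : ℂ) • (Jp n + Jm n)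

/-- `J_y = (J₊ - J₋)/(2i)`. -/
def Jy (n : ℕ) : Matrix (Fin (n+1)) (Fin (n+1)) ℂ := (1/(2 * Complex.I)) • (Jp n - Jm n)

/-- The Landau–Streater map `Φ(X) = (JₓXJₓ + J_yXJ_y + J_zXJ_z)/(j(j+1))`. -/
def LS (n : ℕ) (X : Matrix (Fin (n+1)) (Fin (n+1)) ℂ) : Matrix (Fin (n+1)) (Fin (n+1)) ℂ :=
  (((n : ℂ)/2) * ((n : ℂ)/2 + 1))⁻¹ • (Jx n * X * Jx n + Jy n * X * Jy n + Jz n * X * Jz n)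

end

/-!
`Jx, Jy, Jz` satisfy the `su(2)` relations `⁅Jx, Jy⁆ = i Jz` (and cyclically), so `-i J_a` generates
rotations: e.g. `M θ = cos θ • Jz + sin θ • Jx` solves `M' = ⁅-i Jy, M⁆`. Along any flow
`M' = ⁅G, M⁆`, Jacobi's formula gives `d/dθ det (z - M θ) = tr (adj N * ⁅G, N⁆)` with
`N = z - M θ`, which vanishes because `adj N` commutes with `N`; so the characteristic polynomial
is constant. A rotation about the z-axis followed by one about the y-axis carries `Jz` to
`k₁ Jx + k₂ Jy + k₃ Jz` for every unit vector `k`.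
-/

attribute [local instance] LieRing.ofAssociativeRing

section Jacobi

variable {ι R : Type*} [Fintype ι] [DecidableEq ι]

theorem Matrix.sum_det_updateCol_eq_trace_adjugate_mul [CommRing R] (A B : Matrix ι ι R) :
    ∑ i, (A.updateCol i fun k => B k i).det = (adjugate A * B).trace := by
  simp_rw [← cramer_apply, cramer_eq_adjugate_mulVec]
  simp [trace, mul_apply, mulVec, dotProduct]

theorem Matrix.det_updateCol_eq_sum_perm [CommRing R] (A : Matrix ι ι R) (i : ι) (c : ι → R) :
    (A.updateCol i c).det =
      ∑ σ : Equiv.Perm ι,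
        (Equiv.Perm.sign σ : R) * ((∏ j ∈ Finset.univ.erase i, A (σ j) j) * c (σ i)) := by
  rw [det_apply']
  refine Finset.sum_congr rfl fun σ _ => ?_
  rw [← Finset.mul_prod_erase _ _ (Finset.mem_univ i), mul_comm (updateCol A i c (σ i) i)]
  congr 2
  · exact Finset.prod_congr rfl fun j hj => by simp [Finset.ne_of_mem_erase hj]
  · simp

theorem Matrix.trace_adjugate_mul_lie [CommRing R] (A G : Matrix ι ι R) :
    (adjugate A * ⁅G, A⁆).trace = 0 := by
  rw [Ring.lie_def, mul_sub, trace_sub, ← Matrix.mul_assoc, trace_mul_comm, ← Matrix.mul_assoc,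
    ← Matrix.mul_assoc, mul_adjugate, adjugate_mul, sub_self]

variable [NormedCommRing R] [NormedAlgebra ℝ R]

theorem Matrix.hasDerivAt_det {M : ℝ → Matrix ι ι R} {M' : Matrix ι ι R} {t : ℝ}
    (hM : ∀ i j, HasDerivAt (fun s => M s i j) (M' i j) t) :
    HasDerivAt (fun s => (M s).det) (adjugate (M t) * M').trace t := by
  simp_rw [det_apply', ← sum_det_updateCol_eq_trace_adjugate_mul, det_updateCol_eq_sum_perm,
    Finset.sum_comm (γ := ι), ← Finset.mul_sum, ← smul_eq_mul (a := ∏ j ∈ _, _)]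
  exact HasDerivAt.fun_sum fun σ _ =>
    (HasDerivAt.fun_finsetProd fun i _ => hM (σ i) i).const_mul _

end Jacobi

section Isospectral

variable {ι 𝕜 : Type*} [Fintype ι] [DecidableEq ι] [RCLike 𝕜]

theorem Matrix.charpoly_eq_of_hasDerivAt_lie {M : ℝ → Matrix ι ι 𝕜} {G : Matrix ι ι 𝕜}
    (hM : ∀ t i j, HasDerivAt (fun s => M s i j) (⁅G, M t⁆ i j) t) (t : ℝ) :
    (M t).charpoly = (M 0).charpoly := by
  refine Polynomial.funext fun z => ?_
  simp only [eval_charpoly]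
  have hderiv (s : ℝ) : HasDerivAt (fun s => (scalar ι z - M s).det) 0 s := by
    have hlie : ⁅G, scalar ι z - M s⁆ = -⁅G, M s⁆ := by
      rw [lie_sub, Ring.lie_def G (scalar ι z), (scalar_commute z (Commute.all z) G).eq, sub_self,
        zero_sub]
    have h := hasDerivAt_det (M := fun s => scalar ι z - M s) (t := s)
      (M' := ⁅G, scalar ι z - M s⁆) fun i j => by
        rw [hlie]
        simpa using (hM s i j).const_sub (scalar ι z i j)
    rwa [trace_adjugate_mul_lie] at h
  exact is_const_of_deriv_eq_zero (fun s => (hderiv s).differentiableAt)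
    (fun s => (hderiv s).deriv) t 0

theorem Matrix.charpoly_add_cos_smul_add_sin_smul {C A B G : Matrix ι ι 𝕜} (hC : ⁅G, C⁆ = 0)
    (hA : ⁅G, A⁆ = B) (hB : ⁅G, B⁆ = -A) (θ : ℝ) :
    (C + Real.cos θ • A + Real.sin θ • B).charpoly = (C + A).charpoly := by
  have h := charpoly_eq_of_hasDerivAt_lie (G := G)
    (M := fun t => C + Real.cos t • A + Real.sin t • B) (fun t i j => ?_) θ
  · simpa using h
  rw [lie_add, lie_add, lie_smul, lie_smul, hC, hA, hB, zero_add, smul_neg]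
  simpa [add_assoc, add_comm, sub_eq_add_neg] using
    (((Real.hasDerivAt_cos t).smul_const (A i j)).add
      ((Real.hasDerivAt_sin t).smul_const (B i j))).const_add (C i j)

end Isospectral

theorem Fin.sum_ite_eq_val {R : Type*} [AddCommMonoid R] {m : ℕ} (p : ℕ) (f : Fin m → R) :
    ∑ k : Fin m, (if p = (k : ℕ) then f k else 0) = if h : p < m then f ⟨p, h⟩ else 0 := by
  split_ifs with h
  · rw [Finset.sum_eq_single ⟨p, h⟩] <;> grind
  · exact Finset.sum_eq_zero fun k _ => if_neg (by omega)

theorem Fin.sum_ite_val_add_one_eq {R : Type*} [AddCommMonoid R] {m : ℕ} (p : ℕ) (f : Fin m → R) :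
    ∑ k : Fin m, (if (k : ℕ) + 1 = p then f k else 0) =
      if h : 0 < p ∧ p ≤ m then f ⟨p - 1, by omega⟩ else 0 := by
  split_ifs with h
  · rw [Finset.sum_eq_single ⟨p - 1, by omega⟩] <;> grind
  · exact Finset.sum_eq_zero fun k _ => if_neg (by omega)

theorem exists_eq_sin_mul_cos_sin_mul_sin_cos {x y z : ℝ} (h : x ^ 2 + y ^ 2 + z ^ 2 = 1) :
    ∃ θ φ : ℝ, x = Real.sin θ * Real.cos φ ∧ y = Real.sin θ * Real.sin φ ∧ z = Real.cos θ := by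
  have hz : Real.sin (Real.arccos z) = ‖(⟨x, y⟩ : ℂ)‖ := by
    rw [Real.sin_arccos, Complex.norm_eq_sqrt_sq_add_sq]
    congr 1
    linarith
  refine ⟨Real.arccos z, Complex.arg ⟨x, y⟩, ?_, ?_, ?_⟩
  · rw [hz, Complex.norm_mul_cos_arg]
  · rw [hz, Complex.norm_mul_sin_arg]
  · rw [Real.cos_arccos] <;> nlinarith

theorem neg_I_smul_I_smul {M : Type*} [AddCommGroup M] [Module ℂ M] (m : M) : -I • I • m = m := by
  rw [smul_smul, neg_mul, I_mul_I, neg_neg, one_smul]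

section Spin

variable (n : ℕ)

theorem Jp_apply (a b : Fin (n + 1)) :
    Jp n a b = if (a : ℕ) + 1 = b then ((√(((a : ℕ) + 1) * (n - (a : ℕ)) : ℝ)) : ℂ) else 0 := rfl

theorem Jm_apply (a b : Fin (n + 1)) :
    Jm n a b = if (b : ℕ) + 1 = a then ((√(((b : ℕ) + 1) * (n - (b : ℕ)) : ℝ)) : ℂ) else 0 := by
  simp only [Jm, conjTranspose_apply, Jp_apply]
  split_ifs <;> simp

theorem Jp_mul_Jm :
    Jp n * Jm n = diagonal fun a : Fin (n + 1) => ((a : ℕ) + 1) * (n - (a : ℕ) : ℂ) := by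
  ext a b
  simp only [mul_apply, Jp_apply, Jm_apply, ite_mul, zero_mul]
  rw [Fin.sum_ite_eq_val]
  obtain rfl | hab := eq_or_ne a b
  · have ha : (a : ℝ) ≤ n := by exact_mod_cast Fin.is_le a
    simp only [if_true, diagonal_apply_eq, ← Complex.ofReal_mul]
    split_ifs with h
    · rw [Real.mul_self_sqrt (by nlinarith)]
      push_cast
      ring
    · simp [show (a : ℕ) = n by omega]
  · simp [diagonal_apply_ne _ hab, Fin.val_eq_val, hab.symm]

theorem Jm_mul_Jp :
    Jm n * Jp n = diagonal fun a : Fin (n + 1) => (a : ℕ) * (n - (a : ℕ) + 1 : ℂ) := by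
  ext a b
  simp only [mul_apply, Jp_apply, Jm_apply, ite_mul, zero_mul]
  rw [Fin.sum_ite_val_add_one_eq]
  obtain rfl | hab := eq_or_ne a b
  · simp only [diagonal_apply_eq]
    split_ifs with h h'
    · have ha : (((a : ℕ) - 1 : ℕ) : ℝ) ≤ n := by exact_mod_cast (by omega : (a : ℕ) - 1 ≤ n)
      rw [← Complex.ofReal_mul, Real.mul_self_sqrt (by nlinarith)]
      push_cast [Nat.cast_sub h.1]
      ring
    · omega
    · simp [show (a : ℕ) = 0 by omega]
  · simp [diagonal_apply_ne _ hab]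
    omega

theorem lie_Jz_Jp : ⁅Jz n, Jp n⁆ = Jp n := by
  ext a b
  simp only [Ring.lie_def, Jz, Matrix.sub_apply, diagonal_mul, mul_diagonal, Jp_apply]
  split_ifs with h
  · rw [← h]; push_cast; ring
  · ring

theorem lie_Jz_Jm : ⁅Jz n, Jm n⁆ = -Jm n := by
  ext a b
  simp only [Ring.lie_def, Jz, Matrix.sub_apply, Matrix.neg_apply, diagonal_mul, mul_diagonal,
    Jm_apply]
  split_ifs with h
  · rw [← h]; push_cast; ring
  · ring

theorem lie_Jp_Jm : ⁅Jp n, Jm n⁆ = (2 : ℂ) • Jz n := by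
  rw [Ring.lie_def, Jp_mul_Jm, Jm_mul_Jp, Jz, diagonal_sub, ← diagonal_smul]
  congr 1 with a
  simp only [Pi.smul_apply, smul_eq_mul]
  ring

theorem lie_Jz_Jx : ⁅Jz n, Jx n⁆ = I • Jy n := by
  have h : I * (1 / (2 * I)) = 1 / 2 := by field_simp
  rw [Jx, Jy, lie_smul, lie_add, lie_Jz_Jp, lie_Jz_Jm, smul_smul, h, sub_eq_add_neg]

theorem lie_Jy_Jz : ⁅Jy n, Jz n⁆ = I • Jx n := by
  have h : -(1 / (2 * I)) = I * (1 / 2) := by field_simp; rw [I_sq]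
  rw [Jx, Jy, ← lie_skew, lie_smul, lie_sub, lie_Jz_Jp, lie_Jz_Jm, sub_neg_eq_add, ← neg_smul, h,
    smul_smul]

theorem lie_Jx_Jy : ⁅Jx n, Jy n⁆ = I • Jz n := by
  have h : 1 / 2 * (1 / (2 * I)) * -(2 * 2) = I := by field_simp; rw [I_sq]
  rw [Jx, Jy, smul_lie, lie_smul, add_lie, lie_sub, lie_sub, lie_self, lie_self, ← lie_skew (Jm n),
    lie_Jp_Jm, smul_smul]
  linear_combination (norm := module) h • Jz n

theorem isHermitian_Jz : (Jz n).IsHermitian :=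
  isHermitian_diagonal_of_self_adjoint _ <| by
    ext k
    simp

theorem isHermitian_Jx : (Jx n).IsHermitian := by
  simp [IsHermitian, Jx, Jm, conjTranspose_smul, add_comm]

theorem isHermitian_Jy : (Jy n).IsHermitian := by
  have h : star (1 / (2 * I)) = -(1 / (2 * I)) := by simp
  rw [IsHermitian, Jy, conjTranspose_smul, conjTranspose_sub, Jm, conjTranspose_conjTranspose, h,
    neg_smul, ← smul_neg, neg_sub]

theorem isHermitian_spinComponent (k₁ k₂ k₃ : ℝ) :
    ((k₁ : ℂ) • Jx n + (k₂ : ℂ) • Jy n + (k₃ : ℂ) • Jz n).IsHermitian := by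
  simp only [Complex.coe_smul]
  exact (((isHermitian_Jx n).smul (IsSelfAdjoint.all k₁)).add
    ((isHermitian_Jy n).smul (IsSelfAdjoint.all k₂))).add
      ((isHermitian_Jz n).smul (IsSelfAdjoint.all k₃))

theorem charpoly_spinComponent {k₁ k₂ k₃ : ℝ} (hk : k₁ ^ 2 + k₂ ^ 2 + k₃ ^ 2 = 1) :
    ((k₁ : ℂ) • Jx n + (k₂ : ℂ) • Jy n + (k₃ : ℂ) • Jz n).charpoly = (Jz n).charpoly := by
  obtain ⟨θ, φ, rfl, rfl, rfl⟩ := exists_eq_sin_mul_cos_sin_mul_sin_cos hk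
  have hφ := charpoly_add_cos_smul_add_sin_smul (G := -I • Jz n) (C := Real.cos θ • Jz n)
    (A := Real.sin θ • Jx n) (B := Real.sin θ • Jy n)
    (by rw [lie_smul, smul_lie, lie_self, smul_zero, smul_zero])
    (by rw [lie_smul, smul_lie, lie_Jz_Jx, neg_I_smul_I_smul])
    (by rw [lie_smul, smul_lie, ← lie_skew, lie_Jy_Jz, smul_neg, neg_I_smul_I_smul, smul_neg]) φ
  have hθ := charpoly_add_cos_smul_add_sin_smul (G := -I • Jy n) (C := 0) (A := Jz n) (B := Jx n)
    (lie_zero _) (by rw [smul_lie, lie_Jy_Jz, neg_I_smul_I_smul])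
    (by rw [smul_lie, ← lie_skew, lie_Jx_Jy, smul_neg, neg_I_smul_I_smul]) θ
  rw [zero_add, zero_add] at hθ
  rw [← hθ, ← hφ]
  congr 1
  simp only [Complex.coe_smul, smul_smul]
  module

end Spin

theorem spin_projection_spectrum_general (n : ℕ) (k₁ k₂ k₃ : ℝ)
    (hk : k₁ ^ 2 + k₂ ^ 2 + k₃ ^ 2 = 1) :
    ((k₁ : ℂ) • Jx n + (k₂ : ℂ) • Jy n + (k₃ : ℂ) • Jz n).IsHermitian ∧
      ((k₁ : ℂ) • Jx n + (k₂ : ℂ) • Jy n + (k₃ : ℂ) • Jz n).charpoly =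
        ∏ i : Fin (n+1), (Polynomial.X - Polynomial.C ((n : ℂ)/2 - (i : ℕ))) ∧
      ((k₁ : ℂ) • Jx n + (k₂ : ℂ) • Jy n + (k₃ : ℂ) • Jz n).charpoly = (Jz n).charpoly :=
  ⟨isHermitian_spinComponent n k₁ k₂ k₃,
    by rw [charpoly_spinComponent n hk, Jz, charpoly_diagonal], charpoly_spinComponent n hk⟩

/-- for a unit vector `k = (k₁,k₂,k₃) ∈ ℝ³`, the Hermitian matrix
`k₁Jₓ + k₂J_y + k₃J_z` has eigenvalues (with multiplicity) exactly `j, j-1, …, -j`,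
i.e. the same spectrum as `J_z`; encoded via the characteristic polynomial. -/
theorem spin_projection_spectrum (n : ℕ) (hn : 1 ≤ n) (k₁ k₂ k₃ : ℝ)
    (hk : k₁ ^ 2 + k₂ ^ 2 + k₃ ^ 2 = 1) :
    ((k₁ : ℂ) • Jx n + (k₂ : ℂ) • Jy n + (k₃ : ℂ) • Jz n).IsHermitian ∧
      ((k₁ : ℂ) • Jx n + (k₂ : ℂ) • Jy n + (k₃ : ℂ) • Jz n).charpoly =
        ∏ i : Fin (n+1), (Polynomial.X - Polynomial.C ((n : ℂ)/2 - (i : ℕ))) ∧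
      ((k₁ : ℂ) • Jx n + (k₂ : ℂ) • Jy n + (k₃ : ℂ) • Jz n).charpoly = (Jz n).charpoly :=
  spin_projection_spectrum_general n k₁ k₂ k₃ hk
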